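/- Let κ ∈ ℕ, κ ≥ 1, and define exp₁(τ,T) := exp(−τ/T) and recursively exp_{κ+1}(τ,T) = (2^κ exp_κ(τ,2T) − exp_κ(τ,T))/(2^κ − 1). Then there is a constant C_κ such that for all τ, T > 0: |1 − exp_κ(τ,T)| ≤ C_κ min{(τ/T)^κ, 1} and |∂_τ exp_κ(τ,T)| ≤ C_κ T^{−1} (τ/T)^{κ−1}. -/

import Mathlib

/-!
With `x = τ / T` and the dilation `(D f)(y) = f (y / 2)`, the recursion gives
`exp_κ(τ, T) = (P_κ(D) e)(x)` for `e(y) = exp (-y)` and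
`P_κ(z) = ∏_{i=1}^{κ-1} (2^i z - 1) / (2^i - 1)`. Since `D` scales `y^m` by `2^{-m}`, and
`P_κ(1) = 1` while `P_κ(2^{-m}) = 0` for `1 ≤ m < κ`, the operator `P_κ(D)` sends every polynomial
of degree `< κ` to its constant term. Splitting `e` into its Taylor polynomial of degree `< κ` and
the remainder `R_κ` therefore gives `exp_κ = 1 + P_κ(D) R_κ`, and `|R_κ(y)| ≤ y^κ / κ!` on
`y ≥ 0`. For the derivative, `R_κ' = -R_{κ-1}` and `D` commutes with the Euler operator
`x d/dx`, so `x · ∂ₓ (P_κ(D) R_κ) = -P_κ(D) (y R_{κ-1})`, which is `O(x^κ)`.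
-/

/-- The `κ`-th Richardson extrapolation (in `T`) of the exponential kernel
`exp₁(τ,T) = exp(−τ/T)`, via `exp_{κ+1}(τ,T) = (2^κ exp_κ(τ,2T) − exp_κ(τ,T))/(2^κ − 1)`.
(The value at `κ = 0` is set to `1` and is not used by the recursion.) -/
noncomputable def expRich : ℕ → ℝ → ℝ → ℝ
  | 0, _, _ => 1
  | 1, τ, T => Real.exp (-τ / T)
  | (n + 2), τ, T =>
      (2 ^ (n + 1) * expRich (n + 1) τ (2 * T) - expRich (n + 1) τ T) / (2 ^ (n + 1) - 1)

open Finset Polynomial Real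

open scoped Nat

noncomputable def expNegRem (n : ℕ) (y : ℝ) : ℝ :=
  exp (-y) - ∑ m ∈ range n, (-y) ^ m / m !

lemma hasDerivAt_pow_div_factorial_succ (n : ℕ) (x : ℝ) :
    HasDerivAt (fun x : ℝ => x ^ (n + 1) / (n + 1)!) (x ^ n / n !) x := by
  refine ((hasDerivAt_pow (n + 1) x).div_const _).congr_deriv ?_
  rw [Nat.factorial_succ]
  push_cast
  field_simp

lemma hasDerivAt_expNegRem_succ (n : ℕ) (y : ℝ) :
    HasDerivAt (expNegRem (n + 1)) (-expNegRem n y) y := by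
  induction n with
  | zero =>
    have h1 : expNegRem 1 = fun y => exp (-y) - 1 := by
      funext y
      simp [expNegRem]
    simpa [h1, expNegRem] using ((hasDerivAt_neg y).exp).sub_const 1
  | succ n ih =>
    have hterm : HasDerivAt (fun y : ℝ => (-y) ^ (n + 1) / (n + 1)!) (-((-y) ^ n / n !)) y :=
      ((hasDerivAt_pow_div_factorial_succ n (-y)).comp y (hasDerivAt_neg y)).congr_deriv (by ring)
    have hrem : expNegRem (n + 2) = fun y => expNegRem (n + 1) y - (-y) ^ (n + 1) / (n + 1)! := by
      funext y
      simp only [expNegRem, sum_range_succ _ (n + 1)]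
      ring
    rw [hrem]
    refine (ih.sub hterm).congr_deriv ?_
    simp only [expNegRem, sum_range_succ]
    ring

lemma abs_expNegRem_le (n : ℕ) {y : ℝ} (hy : 0 ≤ y) : |expNegRem n y| ≤ y ^ n / n ! := by
  induction n generalizing y with
  | zero =>
    simpa [expNegRem, abs_of_pos (exp_pos _)] using exp_le_one_iff.mpr (neg_nonpos.mpr hy)
  | succ n ih =>
    refine image_norm_le_of_norm_deriv_right_le_deriv_boundary (a := 0) (b := y)
      (fun x _ => (hasDerivAt_expNegRem_succ n x).continuousAt.continuousWithinAt)
      (fun x _ => (hasDerivAt_expNegRem_succ n x).hasDerivWithinAt)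
      (by simp [expNegRem, sum_range_succ']) (hasDerivAt_pow_div_factorial_succ n)
      (fun x hx => ?_) ⟨hy, le_rfl⟩
    rw [Real.norm_eq_abs, abs_neg]
    exact ih hx.1

noncomputable abbrev halfDilation : Module.End ℝ (ℝ → ℝ) := LinearMap.funLeft ℝ ℝ (· / 2)

lemma halfDilation_pow_apply (j : ℕ) (f : ℝ → ℝ) (x : ℝ) :
    (halfDilation ^ j) f x = f (x / 2 ^ j) := by
  induction j generalizing x with
  | zero => simp
  | succ j ih =>
    rw [pow_succ', Module.End.mul_apply, LinearMap.funLeft_apply, ih, div_div, ← pow_succ']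

lemma aeval_halfDilation_apply (p : ℝ[X]) (f : ℝ → ℝ) (x : ℝ) :
    aeval halfDilation p f x = ∑ j ∈ range (p.natDegree + 1), p.coeff j * f (x / 2 ^ j) := by
  simp [aeval_eq_sum_range, halfDilation_pow_apply]

lemma aeval_halfDilation_sum_pow (p : ℝ[X]) (s : Finset ℕ) (a : ℕ → ℝ) (x : ℝ) :
    aeval halfDilation p (fun y => ∑ m ∈ s, a m * y ^ m) x
      = ∑ m ∈ s, a m * p.eval (2 ^ m)⁻¹ * x ^ m := by
  simp_rw [aeval_halfDilation_apply, eval_eq_sum_range, mul_sum, sum_mul]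
  rw [sum_comm]
  refine sum_congr rfl fun m _ => sum_congr rfl fun j _ => ?_
  rw [div_pow, ← pow_mul, mul_comm j m, pow_mul, inv_pow]
  ring

noncomputable def absCoeffSum (p : ℝ[X]) : ℝ :=
  ∑ j ∈ range (p.natDegree + 1), |p.coeff j|

lemma absCoeffSum_nonneg (p : ℝ[X]) : 0 ≤ absCoeffSum p :=
  sum_nonneg fun _ _ => abs_nonneg _

lemma abs_aeval_halfDilation_le (p : ℝ[X]) {f : ℝ → ℝ} {K : ℝ} {n : ℕ}
    (hf : ∀ y, 0 ≤ y → |f y| ≤ K * y ^ n) {x : ℝ} (hx : 0 ≤ x) :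
    |aeval halfDilation p f x| ≤ absCoeffSum p * K * x ^ n := by
  have hK : 0 ≤ K := by simpa using (abs_nonneg _).trans (hf 1 zero_le_one)
  rw [aeval_halfDilation_apply, absCoeffSum, sum_mul, sum_mul]
  refine (abs_sum_le_sum_abs _ _).trans (sum_le_sum fun j _ => ?_)
  have hxj : 0 ≤ x / 2 ^ j := by positivity
  have hle : (x / 2 ^ j) ^ n ≤ x ^ n :=
    pow_le_pow_left₀ hxj (div_le_self hx (one_le_pow₀ one_le_two)) n
  rw [abs_mul, mul_assoc]
  gcongr
  exact (hf _ hxj).trans (by gcongr)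

lemma hasDerivAt_aeval_halfDilation (p : ℝ[X]) {f f' : ℝ → ℝ}
    (hf : ∀ y, HasDerivAt f (f' y) y) {x : ℝ} (hx : x ≠ 0) :
    HasDerivAt (aeval halfDilation p f) (aeval halfDilation p (fun y => y * f' y) x / x) x := by
  have hfun : aeval halfDilation p f
      = fun x => ∑ j ∈ range (p.natDegree + 1), p.coeff j * f (x / 2 ^ j) :=
    funext (aeval_halfDilation_apply p f)
  rw [hfun, aeval_halfDilation_apply, sum_div]
  refine (HasDerivAt.fun_sum fun j _ =>
      ((hf _).comp x ((hasDerivAt_id x).div_const _)).const_mul _)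
    |>.congr_deriv (sum_congr rfl fun j _ => ?_)
  field_simp
  rfl

noncomputable def richardsonPoly (κ : ℕ) : ℝ[X] :=
  ∏ i ∈ Ico 1 κ, C (2 ^ i - 1)⁻¹ * (C (2 ^ i) * X - 1)

lemma richardsonPoly_eval_one (κ : ℕ) : (richardsonPoly κ).eval 1 = 1 := by
  refine (eval_prod _ _ _).trans (prod_eq_one fun i hi => ?_)
  have : (2 : ℝ) ^ i - 1 ≠ 0 :=
    sub_ne_zero.mpr (one_lt_pow₀ one_lt_two (Nat.one_le_iff_ne_zero.mp (mem_Ico.mp hi).1)).ne'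
  simp [inv_mul_cancel₀ this]

lemma richardsonPoly_eval_inv_two_pow {κ m : ℕ} (hm : m ∈ Ico 1 κ) :
    (richardsonPoly κ).eval (2 ^ m)⁻¹ = 0 := by
  refine (eval_prod _ _ _).trans (prod_eq_zero hm ?_)
  simp

lemma richardsonPoly_succ {κ : ℕ} (hκ : 1 ≤ κ) :
    richardsonPoly (κ + 1) = C (2 ^ κ - 1)⁻¹ * (C (2 ^ κ) * X - 1) * richardsonPoly κ := by
  rw [richardsonPoly, prod_Ico_succ_top hκ, mul_comm, richardsonPoly]

lemma aeval_richardsonPoly_sum_pow {κ : ℕ} (hκ : 1 ≤ κ) (a : ℕ → ℝ) (x : ℝ) :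
    aeval halfDilation (richardsonPoly κ) (fun y => ∑ m ∈ range κ, a m * y ^ m) x = a 0 := by
  rw [aeval_halfDilation_sum_pow, sum_eq_single 0]
  · simp [richardsonPoly_eval_one]
  · intro m hm hm0
    have hm' : m ∈ Ico 1 κ := mem_Ico.mpr ⟨Nat.one_le_iff_ne_zero.mpr hm0, mem_range.mp hm⟩
    simp [richardsonPoly_eval_inv_two_pow hm']
  · exact fun h => absurd (mem_range.mpr hκ) h

lemma expRich_eq_aeval {κ : ℕ} (hκ : 1 ≤ κ) (τ T : ℝ) :
    expRich κ τ T = aeval halfDilation (richardsonPoly κ) (fun y => exp (-y)) (τ / T) := by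
  induction κ, hκ using Nat.le_induction generalizing τ T with
  | base => simp [expRich, richardsonPoly, neg_div]
  | succ n hn ih =>
    obtain ⟨k, rfl⟩ : ∃ k, n = k + 1 := ⟨n - 1, by omega⟩
    rw [expRich, ih, ih, richardsonPoly_succ hn]
    simp only [map_mul, map_sub, aeval_C, aeval_X, map_one, Module.End.mul_apply,
      LinearMap.sub_apply, Module.algebraMap_end_apply, Module.End.one_apply, Pi.smul_apply,
      Pi.sub_apply, LinearMap.funLeft_apply, smul_eq_mul, div_div, mul_comm T 2]
    ring

lemma expRich_eq_one_add {κ : ℕ} (hκ : 1 ≤ κ) (τ T : ℝ) :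
    expRich κ τ T = 1 + aeval halfDilation (richardsonPoly κ) (expNegRem κ) (τ / T) := by
  have hsplit : (fun y => exp (-y))
      = (fun y : ℝ => ∑ m ∈ range κ, (-1 : ℝ) ^ m / m ! * y ^ m) + expNegRem κ := by
    funext y
    simp only [Pi.add_apply, expNegRem, neg_pow y, div_mul_eq_mul_div]
    ring
  rw [expRich_eq_aeval hκ, hsplit, map_add, Pi.add_apply, aeval_richardsonPoly_sum_pow hκ]
  simp

lemma hasDerivAt_expRich_succ (n : ℕ) {τ T : ℝ} (hτ : τ ≠ 0) (hT : T ≠ 0) :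
    HasDerivAt (fun τ' => expRich (n + 1) τ' T)
      (aeval halfDilation (richardsonPoly (n + 1)) (fun y => y * -expNegRem n y) (τ / T) / τ)
      τ := by
  have hF := hasDerivAt_aeval_halfDilation (richardsonPoly (n + 1))
    (hasDerivAt_expNegRem_succ n) (div_ne_zero hτ hT)
  have hfun : (fun τ' => expRich (n + 1) τ' T)
      = fun τ' => 1 + aeval halfDilation (richardsonPoly (n + 1)) (expNegRem (n + 1)) (τ' / T) :=
    funext fun τ' => expRich_eq_one_add (Nat.le_add_left 1 n) τ' T
  rw [hfun]
  refine ((hF.comp τ ((hasDerivAt_id τ).div_const T)).const_add 1).congr_deriv ?_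
  field_simp

lemma abs_one_sub_expRich_le {κ : ℕ} (hκ : 1 ≤ κ) {τ T : ℝ} (hx : 0 ≤ τ / T) :
    |1 - expRich κ τ T| ≤ absCoeffSum (richardsonPoly κ) / κ ! * (τ / T) ^ κ := by
  rw [expRich_eq_one_add hκ, sub_add_cancel_left, abs_neg]
  refine (abs_aeval_halfDilation_le _ (K := 1 / κ !) (fun y hy => ?_) hx).trans_eq (by ring)
  exact (abs_expNegRem_le κ hy).trans_eq (by ring)

lemma abs_expRich_le {κ : ℕ} (hκ : 1 ≤ κ) {τ T : ℝ} (hx : 0 ≤ τ / T) :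
    |expRich κ τ T| ≤ absCoeffSum (richardsonPoly κ) := by
  rw [expRich_eq_aeval hκ]
  simpa using abs_aeval_halfDilation_le _ (K := 1) (n := 0)
    (fun y hy => by simpa [abs_of_pos (exp_pos _)] using neg_nonpos.mpr hy) hx

lemma abs_deriv_expRich_succ_le (n : ℕ) {τ T : ℝ} (hτ : 0 < τ) (hT : 0 < T) :
    |deriv (fun τ' => expRich (n + 1) τ' T) τ|
      ≤ absCoeffSum (richardsonPoly (n + 1)) / n ! * T⁻¹ * (τ / T) ^ n := by
  have hrem : ∀ y, 0 ≤ y → |y * -expNegRem n y| ≤ 1 / n ! * y ^ (n + 1) := fun y hy => by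
    rw [abs_mul, abs_neg, abs_of_nonneg hy]
    calc y * |expNegRem n y| ≤ y * (y ^ n / n !) := by gcongr; exact abs_expNegRem_le n hy
      _ = 1 / n ! * y ^ (n + 1) := by ring
  have hpow : (τ / T) ^ (n + 1) / τ = T⁻¹ * (τ / T) ^ n := by
    rw [pow_succ]
    field_simp
  rw [(hasDerivAt_expRich_succ n hτ.ne' hT.ne').deriv, abs_div, abs_of_pos hτ]
  calc _ ≤ absCoeffSum (richardsonPoly (n + 1)) * (1 / n !) * (τ / T) ^ (n + 1) / τ := by
        gcongr
        exact abs_aeval_halfDilation_le _ hrem (by positivity)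
    _ = _ := by rw [mul_div_assoc, hpow]; ring

/-- For every `κ ≥ 1` there is `C_κ` with
`|1 − exp_κ(τ,T)| ≤ C_κ min{(τ/T)^κ, 1}` and `|∂_τ exp_κ(τ,T)| ≤ C_κ T⁻¹ (τ/T)^{κ−1}`
for all `τ, T > 0`. -/
theorem stmt_11 (κ : ℕ) (hκ : 1 ≤ κ) :
    ∃ C : ℝ, 0 < C ∧ ∀ τ T : ℝ, 0 < τ → 0 < T →
      |1 - expRich κ τ T| ≤ C * min ((τ / T) ^ κ) 1 ∧
      |deriv (fun τ' => expRich κ τ' T) τ| ≤ C * T⁻¹ * (τ / T) ^ (κ - 1) := by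
  set S := absCoeffSum (richardsonPoly κ)
  have hS : 0 ≤ S := absCoeffSum_nonneg _
  have hSdiv (k : ℕ) : S / k ! ≤ 1 + S :=
    (div_le_self hS (by exact_mod_cast k.factorial_pos)).trans (by linarith)
  refine ⟨1 + S, by positivity, fun τ T hτ hT => ⟨?_, ?_⟩⟩
  · have hx : 0 ≤ τ / T := by positivity
    rcases le_total ((τ / T) ^ κ) 1 with h | h
    · rw [min_eq_left h]
      exact (abs_one_sub_expRich_le hκ hx).trans (by gcongr; exact hSdiv κ)
    · rw [min_eq_right h, mul_one]
      exact (abs_sub _ _).trans (by rw [abs_one]; gcongr; exact abs_expRich_le hκ hx)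
  · obtain ⟨n, rfl⟩ : ∃ n, κ = n + 1 := ⟨κ - 1, by omega⟩
    rw [Nat.add_sub_cancel]
    exact (abs_deriv_expRich_succ_le n hτ hT).trans (by gcongr; exact hSdiv n)
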